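/- Let f be a prefix-closed function with branches (L_j)_{j≥0}. Then for every t ≥ 1: ∫_{Ωᵗ} f_t·1_{L^{≤t}∩T^{≤t}}·w_t dμᵗ = ∫_{Ω^∞} f·w·1_{⟨L^{≤t}∩T^{≤t}⟩} dμ^∞. -/

import Mathlib

open MeasureTheory ProbabilityTheory Filter Set
open scoped ENNReal

namespace PaperPPG

variable {Ω : Type*} [MeasurableSpace Ω]

/-- Concatenation of a finite word with an infinite sequence. -/
def cat {j : ℕ} (u : Fin j → Ω) (ω : ℕ → Ω) : ℕ → Ω :=
  fun n => if h : n < j then u ⟨n, h⟩ else ω (n - j)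

/-- Extension of a finite word by the constant `star`. -/
def extendW (star : Ω) {j : ℕ} (u : Fin j → Ω) : ℕ → Ω :=
  fun n => if h : n < j then u ⟨n, h⟩ else star

/-- First `t` letters of an infinite sequence. -/
def take (t : ℕ) (ω : ℕ → Ω) : Fin t → Ω := fun i => ω i

/-- Cylinder generated by a set of words of length `j`. -/
def cyl {j : ℕ} (B : Set (Fin j → Ω)) : Set (ℕ → Ω) := {ω | take j ω ∈ B}

/-- `u` is a prefix of `v`. -/
def IsPref {i j : ℕ} (u : Fin i → Ω) (v : Fin j → Ω) : Prop :=
  ∃ h : i ≤ j, ∀ k : Fin i, u k = v (Fin.castLE h k)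

/-- A sequence of languages, `L j ⊆ Ω^j`, is prefix-free. -/
def PrefixFree (L : (j : ℕ) → Set (Fin j → Ω)) : Prop :=
  ∀ i j : ℕ, i ≠ j → ∀ u ∈ L i, ∀ v ∈ L j, ¬ IsPref u v

/-- `L^{≤ t+1}`: words of length `t+1` having a prefix in some `L j` (necessarily `j ≤ t+1`). -/
def Lle (L : (j : ℕ) → Set (Fin j → Ω)) (t : ℕ) : Set (Fin (t + 1) → Ω) :=
  {v | ∃ j : ℕ, ∃ u ∈ L j, IsPref u v}

/-- `L^{> t+1}`: words of length `t+1` that are prefixes of members of some `L j` with `j > t+1`. -/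
def Lgt (L : (j : ℕ) → Set (Fin j → Ω)) (t : ℕ) : Set (Fin (t + 1) → Ω) :=
  {u | ∃ j : ℕ, t + 1 < j ∧ ∃ v ∈ L j, IsPref u v}

/-- `T_{n+1}`: words of length `n+1` whose letters are outside `T` except the last one, in `T`. -/
def Tword (T : Set Ω) (n : ℕ) : Set (Fin (n + 1) → Ω) :=
  {u | (∀ i : Fin (n + 1), (i : ℕ) < n → u i ∉ T) ∧ u (Fin.last n) ∈ T}

/-- `T^{≤ t+1}`: words of length `t+1` with some letter in `T`. -/
def Tle (T : Set Ω) (t : ℕ) : Set (Fin (t + 1) → Ω) := {u | ∃ i, u i ∈ T}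

/-- Infinite sequences that terminate (enter `T`) in finite time. -/
def Tf (T : Set Ω) : Set (ℕ → Ω) := {ω | ∃ j, ω j ∈ T}

/-- T-respectfulness of a sequence of languages. -/
def TRespectful (T : Set Ω) (L : (j : ℕ) → Set (Fin j → Ω)) : Prop :=
  ∀ n : ℕ, Lgt L n ∩ Tword T n = ∅

/-- Truncated weight of a word of length `t+1`. -/
noncomputable def wt (sc : Ω → ℝ≥0∞) (t : ℕ) (u : Fin (t + 1) → Ω) : ℝ≥0∞ :=
  ∏ i, sc (u i)

/-- Weight of an infinite sequence: the limit (infimum) of the nonincreasing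
sequence of partial products of the scores. -/
noncomputable def w (sc : Ω → ℝ≥0∞) (ω : ℕ → Ω) : ℝ≥0∞ :=
  ⨅ t : ℕ, ∏ i : Fin (t + 1), sc (ω i)

/-- Finite approximation `f_t` of a function on infinite sequences. -/
noncomputable def ft (star : Ω) (t : ℕ) (f : (ℕ → Ω) → ℝ≥0∞) (u : Fin (t + 1) → Ω) : ℝ≥0∞ :=
  f (extendW star u)

/-- A prefix-closed function with branches `L`. -/
structure IsPrefixClosed (T : Set Ω) (f : (ℕ → Ω) → ℝ≥0∞)
    (L : (j : ℕ) → Set (Fin j → Ω)) : Prop where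
  measF : Measurable f
  measL : ∀ j, MeasurableSet (L j)
  pf : PrefixFree L
  supp : Function.support f = ⋃ j, cyl (L j)
  const : ∀ j : ℕ, ∀ u ∈ L j, ∀ ω ω' : ℕ → Ω, f (cat u ω) = f (cat u ω')
  resp : TRespectful T L

/-- Sequences that, from the first moment (if any) they enter `T`, remain in `T` forever. -/
def Theta (T : Set Ω) : Set (ℕ → Ω) :=
  {ω | ∀ n, ω n ∉ T} ∪ ⋃ j : ℕ, {ω | (∀ n, n < j → ω n ∉ T) ∧ ∀ n, j ≤ n → ω n ∈ T}

/-- Finite version of `Theta`, on words of length `n+1`. -/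
def ThetaW (T : Set Ω) (n : ℕ) : Set (Fin (n + 1) → Ω) :=
  {u | ∀ i, u i ∉ T} ∪
    ⋃ j : ℕ, {u | j ≤ n ∧ (∀ i : Fin (n + 1), (i : ℕ) < j → u i ∉ T) ∧
      ∀ i : Fin (n + 1), j ≤ (i : ℕ) → u i ∈ T}

/-- The lifting of `h : Ω → ℝ≥0∞` (supported on `T`) to infinite sequences. -/
noncomputable def lift (T : Set Ω) (h : Ω → ℝ≥0∞) (ω : ℕ → Ω) : ℝ≥0∞ :=
  ∑' n : ℕ, (cyl (Tword T n)).indicator 1 ω * h (ω n)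

/-- The branches of the lifting of `h`: `L 0 = ∅` and `L j = (Ω∖T)^{j-1}·(T ∩ supp h)`. -/
def liftBranch (T : Set Ω) (h : Ω → ℝ≥0∞) : (j : ℕ) → Set (Fin j → Ω)
  | 0 => ∅
  | n + 1 => {u | (∀ i : Fin (n + 1), (i : ℕ) < n → u i ∉ T) ∧
      u (Fin.last n) ∈ T ∩ Function.support h}

/-- The filtering distribution at time `t+1` induced by a measure on words of
length `t+1` and the weight `wt sc t` as global potential. -/
noncomputable def filt (sc : Ω → ℝ≥0∞) (t : ℕ) (μ : Measure (Fin (t + 1) → Ω)) : Measure Ω :=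
  (∫⁻ u, wt sc t u ∂μ)⁻¹ • Measure.map (fun u => u (Fin.last t)) (μ.withDensity (wt sc t))

/-- The data of a Markov chain: an initial law `μ1`, a Markov transition kernel `κ`,
the laws `μF n` of the first `n+1` states, and the law `μI` on infinite
trajectories, uniquely determined by the Ionescu-Tulcea theorem through the
cylinder condition `proj`. -/
structure MarkovSetting (Ω : Type*) [MeasurableSpace Ω] where
  μ1 : Measure Ω
  prob1 : IsProbabilityMeasure μ1
  κ : Kernel Ω Ω
  markov : IsMarkovKernel κ
  μF : (n : ℕ) → Measure (Fin (n + 1) → Ω)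
  μI : Measure (ℕ → Ω)
  probI : IsProbabilityMeasure μI
  base : μF 0 = Measure.map (fun x => fun _ : Fin 1 => x) μ1
  step : ∀ n : ℕ, μF (n + 1) =
    Measure.map (fun p : (Fin (n + 1) → Ω) × Ω => Fin.snoc p.1 p.2)
      ((μF n) ⊗ₘ (κ.comap (fun v => v (Fin.last n)) (measurable_pi_apply _)))
  proj : ∀ n : ℕ, Measure.map (take (n + 1)) μI = μF n

section Aux

lemma measurable_take (t : ℕ) : Measurable (take t : (ℕ → Ω) → Fin t → Ω) :=
  measurable_pi_lambda _ fun _ => measurable_pi_apply _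

lemma measurable_extendW (star : Ω) (j : ℕ) :
    Measurable (extendW star : (Fin j → Ω) → ℕ → Ω) := by
  apply measurable_pi_lambda
  intro n
  unfold extendW
  by_cases h : n < j
  · simp only [dif_pos h]; exact measurable_pi_apply _
  · simp only [dif_neg h]; exact measurable_const

lemma measurable_wt (sc : Ω → ℝ≥0∞) (hsc : Measurable sc) (t : ℕ) :
    Measurable (wt sc t) :=
  Finset.measurable_prod _ fun i _ => hsc.comp (measurable_pi_apply i)

lemma measurableSet_Lle {L : (j : ℕ) → Set (Fin j → Ω)}
    (hL : ∀ j, MeasurableSet (L j)) (t : ℕ) : MeasurableSet (Lle L t) := by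
  have hrw : Lle L t =
      ⋃ j, ⋃ h : j ≤ t + 1, (fun (v : Fin (t+1) → Ω) (k : Fin j) => v (Fin.castLE h k)) ⁻¹' L j := by
    ext v
    simp only [Lle, mem_setOf_eq, mem_iUnion, mem_preimage]
    constructor
    · rintro ⟨j, u, hu, h, hk⟩
      refine ⟨j, h, ?_⟩
      have : (fun k => v (Fin.castLE h k)) = u := by funext k; exact (hk k).symm
      rw [this]; exact hu
    · rintro ⟨j, h, hu⟩
      exact ⟨j, _, hu, h, fun k => rfl⟩
  rw [hrw]
  exact MeasurableSet.iUnion fun j => MeasurableSet.iUnion fun h =>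
    (measurable_pi_lambda _ fun k => measurable_pi_apply _) (hL j)

lemma measurableSet_Tle {T : Set Ω} (hT : MeasurableSet T) (t : ℕ) :
    MeasurableSet (Tle T t) := by
  have : Tle T t = ⋃ i : Fin (t + 1), (fun u : Fin (t+1) → Ω => u i) ⁻¹' T := by
    ext u; simp [Tle]
  rw [this]
  exact MeasurableSet.iUnion fun i => (measurable_pi_apply i) hT

omit [MeasurableSpace Ω] in
lemma cat_eq {j : ℕ} (u : Fin j → Ω) (ω : ℕ → Ω) (h : ∀ k : Fin j, u k = ω k) :
    cat u (fun n => ω (n + j)) = ω := by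
  funext n
  unfold cat
  by_cases hn : n < j
  · simp only [dif_pos hn]; exact h ⟨n, hn⟩
  · simp only [dif_neg hn]
    rw [Nat.sub_add_cancel (le_of_not_gt hn)]

/-- Almost surely, once the chain enters `T` it stays in `T`. -/
lemma ae_absorbing (M : MarkovSetting Ω) {T : Set Ω} (hT : MeasurableSet T)
    (hκT : ∀ ω ∈ T, M.κ ω = Measure.dirac ω) :
    ∀ᵐ ω ∂M.μI, ∀ n : ℕ, ω n ∈ T → ω (n + 1) ∈ T := by
  haveI := M.probI
  haveI := M.markov
  rw [ae_all_iff]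
  intro n
  have hBn : M.μI {ω | ω n ∈ T ∧ ω (n + 1) ∉ T} = 0 := by
    set Cn : Set (Fin (n + 2) → Ω) :=
      {v | v (Fin.castSucc (Fin.last n)) ∈ T ∧ v (Fin.last (n + 1)) ∉ T} with hCn
    have hCnm : MeasurableSet Cn := by
      have h1 : MeasurableSet {v : Fin (n + 2) → Ω | v (Fin.castSucc (Fin.last n)) ∈ T} :=
        measurable_pi_apply _ hT
      have h2 : MeasurableSet {v : Fin (n + 2) → Ω | v (Fin.last (n + 1)) ∉ T} :=
        (measurable_pi_apply (Fin.last (n + 1)) hT).compl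
      exact h1.inter h2
    have hpre : {ω : ℕ → Ω | ω n ∈ T ∧ ω (n + 1) ∉ T} = take (n + 2) ⁻¹' Cn := rfl
    rw [hpre, ← Measure.map_apply (measurable_take (n + 2)) hCnm, M.proj (n + 1), M.step n]
    have hsnoc : Measurable
        (fun p : (Fin (n + 1) → Ω) × Ω => (Fin.snoc p.1 p.2 : Fin (n + 2) → Ω)) := by
      apply measurable_pi_lambda
      intro i
      induction i using Fin.lastCases with
      | last => simpa using measurable_snd
      | cast j => simpa using (show Measurable fun c : (Fin (n + 1) → Ω) × Ω => c.1 j from (measurable_pi_apply j).comp measurable_fst)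
    haveI : IsProbabilityMeasure (M.μF n) := by
      rw [← M.proj n]; exact Measure.isProbabilityMeasure_map (measurable_take (n + 1)).aemeasurable
    rw [Measure.map_apply hsnoc hCnm, Measure.compProd_apply (hsnoc hCnm)]
    have hzero : ∀ u : Fin (n + 1) → Ω,
        (M.κ.comap (fun v => v (Fin.last n)) (measurable_pi_apply _)) u
          (Prod.mk u ⁻¹' ((fun p : (Fin (n + 1) → Ω) × Ω => (Fin.snoc p.1 p.2 : Fin (n + 2) → Ω)) ⁻¹' Cn)) = 0 := by
      intro u
      have hset : (Prod.mk u ⁻¹' ((fun p : (Fin (n + 1) → Ω) × Ω => (Fin.snoc p.1 p.2 : Fin (n + 2) → Ω)) ⁻¹' Cn))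
          = {x | u (Fin.last n) ∈ T ∧ x ∉ T} := by
        ext x
        simp only [mem_preimage, hCn, mem_setOf_eq, Fin.snoc_castSucc, Fin.snoc_last]
      rw [hset, Kernel.comap_apply]
      by_cases hu : u (Fin.last n) ∈ T
      · have : {x | u (Fin.last n) ∈ T ∧ x ∉ T} = Tᶜ := by ext x; simp [hu]
        rw [this, hκT _ hu, Measure.dirac_apply' _ hT.compl]
        simp [hu]
      · have : {x | u (Fin.last n) ∈ T ∧ x ∉ T} = ∅ := by ext x; simp [hu]
        simp [this]
    simp only [hzero]
    simp
  rw [ae_iff]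
  convert hBn using 2
  ext ω
  simp only [mem_setOf_eq]
  tauto

end Aux

/-- **Finite/infinite integral identity** for prefix-closed functions. -/
theorem finite_infinite_integral_eq
    (M : MarkovSetting Ω) (T : Set Ω) (hT : MeasurableSet T)
    (hκT : ∀ ω ∈ T, M.κ ω = Measure.dirac ω)
    (sc : Ω → ℝ≥0∞) (hsc : Measurable sc) (hsc1 : ∀ x, sc x ≤ 1)
    (hscT : ∀ ω ∈ T, sc ω = 1) (star : Ω)
    (f : (ℕ → Ω) → ℝ≥0∞) (L : (j : ℕ) → Set (Fin j → Ω))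
    (hf : IsPrefixClosed T f L) :
    ∀ t : ℕ,
      ∫⁻ u, ft star t f u * ((Lle L t ∩ Tle T t).indicator 1 u) * wt sc t u ∂(M.μF t) =
        ∫⁻ ω, f ω * w sc ω * ((cyl (Lle L t ∩ Tle T t)).indicator 1 ω) ∂M.μI := by
  intro t
  haveI := M.probI
  set S := Lle L t ∩ Tle T t with hS
  have hSm : MeasurableSet S := (measurableSet_Lle hf.measL t).inter (measurableSet_Tle hT t)
  have hg : Measurable (fun u => ft star t f u * (S.indicator 1 u) * wt sc t u) :=
    ((hf.measF.comp (measurable_extendW star (t + 1))).mul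
      (measurable_one.indicator hSm)).mul (measurable_wt sc hsc t)
  rw [← M.proj t, lintegral_map hg (measurable_take (t + 1))]
  apply lintegral_congr_ae
  filter_upwards [ae_absorbing M hT hκT] with ω hω
  by_cases hmem : take (t + 1) ω ∈ S
  · have hcyl : ω ∈ cyl S := hmem
    rw [Set.indicator_of_mem hmem, Set.indicator_of_mem hcyl]
    simp only [Pi.one_apply, mul_one]
    obtain ⟨hLmem, hTmem⟩ := hmem
    have h1 : ft star t f (take (t + 1) ω) = f ω := by
      obtain ⟨j, u, hu, hj, hk⟩ := hLmem
      have hpre : ∀ k : Fin j, u k = ω k := fun k => hk k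
      have hωeq : cat u (fun n => ω (n + j)) = ω := cat_eq u ω hpre
      have hpre' : ∀ k : Fin j, u k = extendW star (take (t + 1) ω) k := by
        intro k
        have hk' : (k : ℕ) < t + 1 := lt_of_lt_of_le k.isLt hj
        simp only [extendW, dif_pos hk']
        exact hk k
      have hω'eq : cat u (fun n => extendW star (take (t + 1) ω) (n + j))
          = extendW star (take (t + 1) ω) := cat_eq u _ hpre'
      calc ft star t f (take (t + 1) ω)
          = f (cat u (fun n => extendW star (take (t + 1) ω) (n + j))) := by
            rw [hω'eq]; rfl
        _ = f (cat u (fun n => ω (n + j))) := hf.const j u hu _ _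
        _ = f ω := by rw [hωeq]
    have h2 : wt sc t (take (t + 1) ω) = w sc ω := by
      obtain ⟨i, hi⟩ := hTmem
      have habs : ∀ m : ℕ, ω ((i : ℕ) + m) ∈ T := by
        intro m; induction m with
        | zero => simpa using (show ω (i : ℕ) ∈ T from hi)
        | succ m ih => exact hω _ ih
      have hsc1' : ∀ n, t < n → sc (ω n) = 1 := by
        intro n hn
        have hin : (i : ℕ) ≤ n := le_trans (Nat.le_of_lt_succ i.isLt) (le_of_lt hn)
        have := habs (n - i)
        rw [Nat.add_sub_cancel' hin] at this
        exact hscT _ this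
      set P : ℕ → ℝ≥0∞ := fun m => ∏ k ∈ Finset.range m, sc (ω k) with hP
      have hfin : ∀ m, (∏ k : Fin (m + 1), sc (ω k)) = P (m + 1) := fun m => by
        simp only [hP]; exact Fin.prod_univ_eq_prod_range (fun k => sc (ω k)) (m + 1)
      have hwt : wt sc t (take (t + 1) ω) = P (t + 1) := hfin t
      have hw : w sc ω = ⨅ m : ℕ, P (m + 1) := iInf_congr hfin
      rw [hwt, hw]
      apply le_antisymm
      · apply le_iInf
        intro m
        rcases le_or_gt m t with hmt | htm
        · have hteq : t + 1 = (m + 1) + (t - m) := by omega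
          simp only [hP]
          rw [hteq, Finset.prod_range_add]
          calc (∏ k ∈ Finset.range (m + 1), sc (ω k)) *
                ∏ k ∈ Finset.range (t - m), sc (ω (m + 1 + k))
              ≤ (∏ k ∈ Finset.range (m + 1), sc (ω k)) * 1 := by
                gcongr
                exact Finset.prod_le_one (fun _ _ => zero_le) (fun k _ => hsc1 _)
            _ = ∏ k ∈ Finset.range (m + 1), sc (ω k) := mul_one _
        · have hmeq : m + 1 = (t + 1) + (m - t) := by omega
          have hone : ∀ k ∈ Finset.range (m - t), sc (ω (t + 1 + k)) = 1 := fun k _ =>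
            hsc1' _ (by omega)
          simp only [hP]
          have key : (∏ k ∈ Finset.range (m + 1), sc (ω k))
              = ∏ k ∈ Finset.range (t + 1), sc (ω k) := by
            rw [hmeq, Finset.prod_range_add, Finset.prod_eq_one hone, mul_one]
          exact le_of_eq key.symm
      · exact iInf_le _ t
    rw [h1, h2]
  · have hcyl : ω ∉ cyl S := hmem
    rw [Set.indicator_of_notMem hmem, Set.indicator_of_notMem hcyl]
    simp

end PaperPPG
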